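/- Let y_1, …, y_m be nonzero complex numbers with y_k^n = (−1)^{m+1} for all k. Let i = (i_1,…,i_m) with 1 ≤ i_1 < ⋯ < i_m ≤ n, let d ≥ 0, and let α = (i;d). Then det[(y_k^{\,n−α_j})_{1≤k,j≤m}] = det[(y_k^{\,n−i_j})_{1≤k,j≤m}], where powers with negative integer exponents are interpreted via inverses (y^{−s} = (y^{−1})^s). In other words, with D(β) := det[(y_k^{\,n−β_j})], one has D(α) = D(i), including the signs. -/

import Mathlib

/-!
Going from `(i;d)` to `(i;d+1)` rotates the columns of the alternant cyclically by one step and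
raises the exponent index of the wrapped column by `n`, i.e. multiplies that column by
`y_k^{-n} = (-1)^{m+1}`. The rotation contributes the sign `(-1)^{m-1}`, so the determinant is
unchanged, and induction on `d` concludes.
-/

/-- The index `(i;d)` : writing `d = k*m + r` with `0 ≤ r < m`,
`(i;d)_l = k*n + i_{l+r}` for `l ≤ m - r` and `(i;d)_l = (k+1)*n + i_{l-m+r}`
for `l > m - r` (zero-based indexing here). -/
def semi (n : ℕ) {m : ℕ} (i : Fin m → ℤ) (d : ℕ) : Fin m → ℤ := fun l =>
  if h : (l : ℕ) + d % m < m then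
    (d / m : ℤ) * n + i ⟨(l : ℕ) + d % m, h⟩
  else
    ((d / m : ℤ) + 1) * n +
      i ⟨(l : ℕ) + d % m - m, by
        have hl := l.2
        have hmod : d % m < m := Nat.mod_lt d (by omega)
        omega⟩

open Matrix

section Semi

variable (n : ℕ) {m : ℕ}

def periodicExt (i : Fin (m + 1) → ℤ) (t : ℕ) : ℤ :=
  ((t / (m + 1) : ℕ) : ℤ) * n + i ⟨t % (m + 1), Nat.mod_lt t m.succ_pos⟩

theorem semi_apply (i : Fin (m + 1) → ℤ) (d : ℕ) (l : Fin (m + 1)) :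
    semi n i d l = periodicExt n i (l + d) := by
  have hl : (l : ℕ) / (m + 1) = 0 := Nat.div_eq_of_lt l.2
  have hdiv := Nat.add_div (a := l) (b := d) (c := m + 1) (by omega)
  have hmod := Nat.add_mod (l : ℕ) d (m + 1)
  rw [Nat.mod_eq_of_lt l.2] at hdiv hmod
  unfold semi periodicExt
  split_ifs with h
  · rw [if_neg (by omega)] at hdiv
    rw [Nat.mod_eq_of_lt h] at hmod
    congr 2
    · push_cast [hdiv, hl]; ring
    · ext; simp [hmod]
  · rw [if_pos (by omega)] at hdiv
    have hr : d % (m + 1) < m + 1 := Nat.mod_lt d (by omega)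
    rw [Nat.mod_eq_sub_mod (a := l + d % (m + 1)) (by omega),
      Nat.mod_eq_of_lt (a := l + d % (m + 1) - (m + 1)) (by omega)] at hmod
    congr 2
    · push_cast [hdiv, hl]; ring
    · ext; simp [hmod]

theorem periodicExt_add_period (i : Fin (m + 1) → ℤ) (t : ℕ) :
    periodicExt n i (t + (m + 1)) = periodicExt n i t + n := by
  simp only [periodicExt, Nat.add_div_right t m.succ_pos, Nat.add_mod_right]
  push_cast
  ring

def cycleShift (α : Fin (m + 1) → ℤ) (j : Fin (m + 1)) : ℤ :=
  α (finRotate (m + 1) j) + if j = Fin.last m then (n : ℤ) else 0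

theorem semi_zero (i : Fin (m + 1) → ℤ) : semi n i 0 = i := by
  ext l
  simp [semi_apply, periodicExt, Nat.div_eq_of_lt l.2, Nat.mod_eq_of_lt l.2]

theorem semi_succ (i : Fin (m + 1) → ℤ) (d : ℕ) :
    semi n i (d + 1) = cycleShift n (semi n i d) := by
  ext j
  rw [cycleShift, semi_apply, semi_apply]
  by_cases hj : j = Fin.last m
  · subst hj
    rw [finRotate_last, if_pos rfl, Fin.val_last, Fin.val_zero, zero_add,
      ← periodicExt_add_period]
    congr 1; ring
  · obtain ⟨j, hjm⟩ := j
    have hj' : j < m := by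
      have : j ≠ m := fun h => hj (Fin.ext h)
      omega
    rw [finRotate_of_lt hj', if_neg hj, add_zero]
    congr 1; ring

end Semi

theorem det_zpow_sub_cycleShift {K : Type*} [Field K] {m : ℕ} (n : ℕ) (y : Fin (m + 1) → K)
    (hy0 : ∀ k, y k ≠ 0) (hy : ∀ k, y k ^ n = (-1) ^ m) (α : Fin (m + 1) → ℤ) :
    det (of fun k j => y k ^ ((n : ℤ) - cycleShift n α j)) =
      det (of fun k j => y k ^ ((n : ℤ) - α j)) := by
  set M : Matrix (Fin (m + 1)) (Fin (m + 1)) K := of fun k j => y k ^ ((n : ℤ) - α j)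
  have hcol : (of fun k j => y k ^ ((n : ℤ) - cycleShift n α j)) =
      of fun k j => (if j = Fin.last m then (-1) ^ m else 1) * M.submatrix id (finRotate _) k j := by
    ext k j
    simp only [cycleShift, of_apply, submatrix_apply, id_eq, M]
    split_ifs
    · rw [show (n : ℤ) - (α (finRotate _ j) + n) = -n + (n - α (finRotate _ j)) by ring,
        zpow_add₀ (hy0 k), _root_.zpow_neg, zpow_natCast, hy k, ← inv_pow, inv_neg_one]
    · simp
  rw [hcol, det_mul_row, det_permute', Fintype.prod_ite_eq', sign_finRotate, ← mul_assoc]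
  push_cast
  rw [← pow_add, ← two_mul, pow_mul, neg_one_sq, one_pow, one_mul]

theorem stmt11_general (m : ℕ) (n : ℕ)
    (y : Fin m → ℂ) (hy0 : ∀ k, y k ≠ 0)
    (hy : ∀ k, y k ^ n = (-1 : ℂ) ^ (m + 1))
    (i : Fin m → ℤ) (d : ℕ) :
    Matrix.det (Matrix.of fun k j : Fin m => y k ^ ((n : ℤ) - semi n i d j)) =
      Matrix.det (Matrix.of fun k j : Fin m => y k ^ ((n : ℤ) - i j)) := by
  cases m with
  | zero => simp only [det_isEmpty]
  | succ m =>
    have hy' : ∀ k, y k ^ n = (-1) ^ m := fun k => by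
      rw [hy k, add_assoc, pow_add, neg_one_sq, mul_one]
    induction d with
    | zero => rw [semi_zero]
    | succ d ih => rw [semi_succ, det_zpow_sub_cycleShift n y hy0 hy', ih]

/-- With `y_k^n = (-1)^{m+1}`, the alternant `D(β) = det[y_k^{n - β_j}]`
(negative powers interpreted via inverses) satisfies `D((i;d)) = D(i)`,
including the sign. -/
theorem stmt11 (m p : ℕ) (hm : 1 ≤ m) (hp : 1 ≤ p) (n : ℕ) (hn : n = m + p)
    (y : Fin m → ℂ) (hy0 : ∀ k, y k ≠ 0)
    (hy : ∀ k, y k ^ n = (-1 : ℂ) ^ (m + 1))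
    (i : Fin m → ℤ) (hi1 : ∀ l, 1 ≤ i l) (hi2 : StrictMono i)
    (hi3 : ∀ l, i l ≤ n) (d : ℕ) :
    Matrix.det (Matrix.of fun k j : Fin m => y k ^ ((n : ℤ) - semi n i d j)) =
      Matrix.det (Matrix.of fun k j : Fin m => y k ^ ((n : ℤ) - i j)) :=
  stmt11_general m n y hy0 hy i d
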